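/- arXiv:1204.5456 — 2 statements merged into one kernel-verified Lean document; each statement's English description precedes it below -/
import Mathlib

section
/- Let k ≥ 2 be an integer and let ε be a real number with k − 1 < 1/ε < k, and set p(n) := n^{−1+ε}. Then, as n → ∞, the probability that the two vertices 0 and 1 of Fin n are joined in G(n, p(n)) by a path of length at most k − 1 tends to 0. (Consequently, with probability tending to 1, the diameter of G(n,p(n)) is at least k, where a disconnected graph has infinite diameter.) -/
open MeasureTheory

/-- The Bernoulli measure on `Bool` with parameter `p`: `true` with probability `p`,
`false` with probability `1 - p`. -/
noncomputable def bernoulliMeasure (p : ℝ) : Measure Bool :=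
  ENNReal.ofReal p • Measure.dirac true + ENNReal.ofReal (1 - p) • Measure.dirac false

/-- Unordered pairs of distinct vertices of `Fin n`. -/
abbrev EdgeIdx (n : ℕ) := {e : Sym2 (Fin n) // ¬ e.IsDiag}

/-- Independent Bernoulli(p) indicators, one for each unordered pair of distinct vertices. -/
noncomputable def edgeMeasure (n : ℕ) (p : ℝ) : Measure (EdgeIdx n → Bool) :=
  Measure.pi fun _ => bernoulliMeasure p

/-- The simple graph determined by an edge-indicator function: the edges are exactly the
pairs with indicator `true`. -/
def graphOf {n : ℕ} (f : EdgeIdx n → Bool) : SimpleGraph (Fin n) where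
  Adj v w := v ≠ w ∧ ∀ e : EdgeIdx n, e.1 = s(v, w) → f e = true
  symm := by
    constructor
    rintro v w ⟨hvw, hf⟩
    exact ⟨hvw.symm, fun e he => hf e (he.trans Sym2.eq_swap)⟩
  loopless := ⟨fun v h => h.1 rfl⟩

instance (n : ℕ) : MeasurableSpace (SimpleGraph (Fin n)) := ⊤

/-- The Erdős–Rényi random graph measure `G(n, p)`: the pushforward of the product of
Bernoulli(p) measures under the map sending an indicator function to the corresponding graph. -/
noncomputable def erdosRenyi (n : ℕ) (p : ℝ) : Measure (SimpleGraph (Fin n)) :=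
  (edgeMeasure n p).map graphOf


/-- A path of length `l` between `a` and `b` in a graph `G`: a sequence
`a = γ₀, γ₁, …, γ_l = b` of pairwise distinct vertices in which consecutive vertices
are adjacent. -/
def IsPathBetween {V : Type*} (G : SimpleGraph V) (l : ℕ) (a b : V)
    (γ : Fin (l + 1) → V) : Prop :=
  γ 0 = a ∧ γ (Fin.last l) = b ∧ Function.Injective γ ∧
    ∀ i : Fin l, G.Adj (γ i.castSucc) (γ i.succ)

/-! First moment method. A path of length `m + 1` from `a` to `b` is fixed by its `m` interior
vertices and is present with probability `p ^ (m + 1)`, so the expected number of such paths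
is at most `n ^ m p ^ (m + 1) = n ^ (ε (m + 1) - 1)`, which tends to `0` as long as
`ε (m + 1) < 1`, i.e. for every length `m + 1 ≤ k - 1 < 1 / ε`. The union bound over the
finitely many lengths then makes short paths between `0` and `1` unlikely, and a graph of
diameter less than `k` has such a path. -/

open Filter Topology Finset

lemma bernoulliMeasure_singleton_true (p : ℝ) : bernoulliMeasure p {true} = ENNReal.ofReal p := by
  simp [bernoulliMeasure, Measure.dirac_apply']

lemma isProbabilityMeasure_bernoulliMeasure {p : ℝ} (h0 : 0 ≤ p) (h1 : p ≤ 1) :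
    IsProbabilityMeasure (bernoulliMeasure p) := by
  constructor
  simp only [bernoulliMeasure, Measure.coe_add, Measure.coe_smul, Pi.add_apply, Pi.smul_apply,
    measure_univ, smul_eq_mul, mul_one]
  rw [← ENNReal.ofReal_add h0 (by linarith)]
  norm_num

lemma measure_pi_bernoulliMeasure_forall_true {ι : Type*} [Fintype ι] {p : ℝ} (h0 : 0 ≤ p)
    (h1 : p ≤ 1) (S : Finset ι) :
    Measure.pi (fun _ : ι => bernoulliMeasure p) {f | ∀ i ∈ S, f i = true}
      = ENNReal.ofReal p ^ #S := by
  have := isProbabilityMeasure_bernoulliMeasure h0 h1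
  have hS : {f : ι → Bool | ∀ i ∈ S, f i = true} = (S : Set ι).pi fun _ => {true} := by
    ext f; simp [Set.mem_pi]
  rw [hS, Measure.pi_pi_finset]
  simp [bernoulliMeasure_singleton_true]

def pathEdge {n l : ℕ} (γ : Fin (l + 1) → Fin n) (hγ : Function.Injective γ) (i : Fin l) :
    EdgeIdx n :=
  ⟨s(γ i.castSucc, γ i.succ), Sym2.mk_isDiag_iff.not.mpr (hγ.ne Fin.castSucc_lt_succ.ne)⟩

lemma pathEdge_injective {n l : ℕ} (γ : Fin (l + 1) → Fin n) (hγ : Function.Injective γ) :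
    Function.Injective (pathEdge γ hγ) := by
  intro i j hij
  rcases Sym2.eq_iff.mp (congrArg Subtype.val hij) with ⟨h, -⟩ | ⟨h, h'⟩
  · exact Fin.castSucc_injective _ (hγ h)
  · have := congrArg Fin.val (hγ h)
    have := congrArg Fin.val (hγ h')
    simp only [Fin.val_castSucc, Fin.val_succ] at *
    omega

lemma edgeMeasure_isPathBetween_le {n : ℕ} {p : ℝ} (h0 : 0 ≤ p) (h1 : p ≤ 1) {l : ℕ}
    {a b : Fin n} (γ : Fin (l + 1) → Fin n) :
    edgeMeasure n p {f | IsPathBetween (graphOf f) l a b γ} ≤ ENNReal.ofReal p ^ l := by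
  classical
  by_cases hγ : Function.Injective γ
  · calc edgeMeasure n p {f | IsPathBetween (graphOf f) l a b γ}
        ≤ edgeMeasure n p {f | ∀ e ∈ univ.image (pathEdge γ hγ), f e = true} := by
          refine measure_mono fun f hf e he => ?_
          obtain ⟨i, -, rfl⟩ := mem_image.mp he
          exact (hf.2.2.2 i).2 _ rfl
      _ = ENNReal.ofReal p ^ l := by
          rw [edgeMeasure, measure_pi_bernoulliMeasure_forall_true h0 h1,
            card_image_of_injective _ (pathEdge_injective γ hγ), card_univ, Fintype.card_fin]
  · have : {f | IsPathBetween (graphOf f) l a b γ} = ∅ :=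
      Set.eq_empty_of_forall_notMem fun f hf => hγ hf.2.2.1
    simp [this]

lemma card_filter_endpoints_le {α : Type*} [Fintype α] [DecidableEq α] (m : ℕ) (a b : α) :
    #{γ : Fin (m + 2) → α | γ 0 = a ∧ γ (Fin.last _) = b} ≤ Fintype.card α ^ m := by
  refine (card_le_card_of_injOn (t := (univ : Finset (Fin m → α)))
    (fun γ j => γ j.succ.castSucc) (fun _ _ => mem_coe.2 (mem_univ _))
    fun γ hγ γ' hγ' hint => funext fun i => ?_).trans_eq (by simp)
  simp only [coe_filter, mem_univ, true_and, Set.mem_ofPred_eq] at hγ hγ'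
  refine Fin.cases (hγ.1.trans hγ'.1.symm) (fun j => ?_) i
  refine Fin.lastCases ?_ (fun j' => ?_) j
  · simpa only [Fin.succ_last] using hγ.2.trans hγ'.2.symm
  · simpa only [Fin.succ_castSucc] using congrFun hint j'

lemma edgeMeasure_exists_isPathBetween_le {n : ℕ} {p : ℝ} (h0 : 0 ≤ p) (h1 : p ≤ 1) (m : ℕ)
    (a b : Fin n) :
    edgeMeasure n p {f | ∃ γ : Fin (m + 2) → Fin n, IsPathBetween (graphOf f) (m + 1) a b γ}
      ≤ ENNReal.ofReal (n ^ m * p ^ (m + 1)) := by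
  classical
  set T := ({γ : Fin (m + 2) → Fin n | γ 0 = a ∧ γ (Fin.last _) = b} : Finset _)
  calc edgeMeasure n p {f | ∃ γ : Fin (m + 2) → Fin n, IsPathBetween (graphOf f) (m + 1) a b γ}
      ≤ edgeMeasure n p (⋃ γ ∈ T, {f | IsPathBetween (graphOf f) (m + 1) a b γ}) := by
        refine measure_mono fun f ⟨γ, hγ⟩ => Set.mem_biUnion ?_ hγ
        simp [T, hγ.1, hγ.2.1]
    _ ≤ ∑ γ ∈ T, edgeMeasure n p {f | IsPathBetween (graphOf f) (m + 1) a b γ} :=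
        measure_biUnion_finset_le _ _
    _ ≤ ∑ _γ ∈ T, ENNReal.ofReal p ^ (m + 1) :=
        sum_le_sum fun γ _ => edgeMeasure_isPathBetween_le h0 h1 γ
    _ = #T * ENNReal.ofReal p ^ (m + 1) := by rw [sum_const, nsmul_eq_mul]
    _ ≤ n ^ m * ENNReal.ofReal p ^ (m + 1) := by
        gcongr
        exact_mod_cast (card_filter_endpoints_le m a b).trans_eq (by rw [Fintype.card_fin])
    _ = ENNReal.ofReal (n ^ m * p ^ (m + 1)) := by
        rw [ENNReal.ofReal_mul (by positivity), ENNReal.ofReal_pow (by positivity),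
          ENNReal.ofReal_pow h0, ENNReal.ofReal_natCast]

lemma erdosRenyi_apply (n : ℕ) (p : ℝ) (A : Set (SimpleGraph (Fin n))) :
    erdosRenyi n p A = edgeMeasure n p (graphOf ⁻¹' A) :=
  Measure.map_apply (measurable_of_countable _) MeasurableSpace.measurableSet_top

lemma isProbabilityMeasure_erdosRenyi {n : ℕ} {p : ℝ} (h0 : 0 ≤ p) (h1 : p ≤ 1) :
    IsProbabilityMeasure (erdosRenyi n p) := by
  have := isProbabilityMeasure_bernoulliMeasure h0 h1
  unfold erdosRenyi edgeMeasure
  exact Measure.isProbabilityMeasure_map (measurable_of_countable _).aemeasurable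

lemma IsPathBetween.length_ne_zero {V : Type*} {G : SimpleGraph V} {l : ℕ} {a b : V}
    {γ : Fin (l + 1) → V} (h : IsPathBetween G l a b γ) (hab : a ≠ b) : l ≠ 0 := by
  rintro rfl
  exact hab (h.1.symm.trans h.2.1)

lemma erdosRenyi_exists_short_path_le {n : ℕ} {p : ℝ} (h0 : 0 ≤ p) (h1 : p ≤ 1) {a b : Fin n}
    (hab : a ≠ b) (L : ℕ) :
    erdosRenyi n p {G | ∃ l ≤ L, ∃ γ : Fin (l + 1) → Fin n, IsPathBetween G l a b γ}
      ≤ ∑ m ∈ range L, ENNReal.ofReal (n ^ m * p ^ (m + 1)) := by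
  rw [erdosRenyi_apply]
  calc _ ≤ edgeMeasure n p (⋃ m ∈ range L,
          {f | ∃ γ : Fin (m + 2) → Fin n, IsPathBetween (graphOf f) (m + 1) a b γ}) := by
        refine measure_mono ?_
        rintro f ⟨l, hl, γ, hγ⟩
        obtain ⟨m, rfl⟩ := Nat.exists_eq_succ_of_ne_zero (hγ.length_ne_zero hab)
        exact Set.mem_biUnion (mem_range.2 hl) ⟨γ, hγ⟩
    _ ≤ _ := (measure_biUnion_finset_le _ _).trans
        (sum_le_sum fun m _ => edgeMeasure_exists_isPathBetween_le h0 h1 m a b)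

lemma SimpleGraph.Walk.IsPath.isPathBetween {V : Type*} {G : SimpleGraph V} {u v : V}
    {q : G.Walk u v} (hq : q.IsPath) : IsPathBetween G q.length u v fun i => q.getVert i :=
  ⟨q.getVert_zero, q.getVert_length,
    fun i j hij => Fin.ext (hq.getVert_injOn (Nat.lt_succ_iff.mp i.isLt)
      (Nat.lt_succ_iff.mp j.isLt) hij),
    fun i => q.adj_getVert_succ i.isLt⟩

lemma SimpleGraph.exists_isPathBetween_of_edist_lt {V : Type*} {G : SimpleGraph V} {u v : V}
    {m : ℕ} (h : G.edist u v < m) : ∃ l < m, ∃ γ : Fin (l + 1) → V, IsPathBetween G l u v γ := by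
  have hr : G.Reachable u v := G.reachable_of_edist_ne_top h.ne_top
  obtain ⟨q, hq, hlen⟩ := hr.exists_path_of_dist
  refine ⟨q.length, ?_, _, hq.isPathBetween⟩
  rw [← hr.coe_dist_eq_edist] at h
  exact hlen ▸ ENat.natCast_lt_natCast.mp h

lemma one_sub_erdosRenyi_exists_short_path_le {n : ℕ} {p : ℝ} (h0 : 0 ≤ p) (h1 : p ≤ 1)
    (a b : Fin n) (k : ℕ) :
    1 - erdosRenyi n p {G | ∃ l ≤ k - 1, ∃ γ : Fin (l + 1) → Fin n, IsPathBetween G l a b γ}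
      ≤ erdosRenyi n p {G | (k : ℕ∞) ≤ G.ediam} := by
  have := isProbabilityMeasure_erdosRenyi (n := n) h0 h1
  rw [← prob_compl_eq_one_sub MeasurableSpace.measurableSet_top]
  refine measure_mono fun G hG => ?_
  show (k : ℕ∞) ≤ G.ediam
  refine not_lt.mp fun hlt => hG ?_
  obtain ⟨l, hl, γ, hγ⟩ := G.exists_isPathBetween_of_edist_lt (G.edist_le_ediam.trans_lt hlt)
  exact ⟨l, by omega, γ, hγ⟩

lemma tendsto_pow_mul_rpow_pow_atTop {ε : ℝ} {m : ℕ} (h : ε * (m + 1) < 1) :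
    Tendsto (fun x : ℝ => x ^ m * (x ^ (-1 + ε)) ^ (m + 1)) atTop (𝓝 0) := by
  refine (tendsto_rpow_neg_atTop (by linarith : 0 < 1 - ε * (m + 1))).congr' ?_
  filter_upwards [eventually_gt_atTop 0] with x hx
  rw [← Real.rpow_natCast, ← Real.rpow_natCast, ← Real.rpow_mul hx.le, ← Real.rpow_add hx]
  congr 1
  push_cast
  ring

theorem no_short_path_and_diam_ge_general
    (k : ℕ) (hk : 2 ≤ k) (ε : ℝ) (h1 : (k : ℝ) - 1 < 1 / ε) :
    Filter.Tendsto
      (fun n : ℕ => erdosRenyi (n + 2) (((n + 2 : ℕ) : ℝ) ^ (-1 + ε))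
        {G | ∃ l ≤ k - 1, ∃ γ : Fin (l + 1) → Fin (n + 2), IsPathBetween G l 0 1 γ})
      Filter.atTop (nhds 0)
    ∧ Filter.Tendsto
      (fun n : ℕ => erdosRenyi (n + 2) (((n + 2 : ℕ) : ℝ) ^ (-1 + ε))
        {G | (k : ℕ∞) ≤ G.ediam})
      Filter.atTop (nhds 1) := by
  have hk2 : (2 : ℝ) ≤ k := by exact_mod_cast hk
  have hε : 0 < ε := one_div_pos.mp (by linarith)
  have hεk : ε * (k - 1) < 1 := by
    have := mul_lt_mul_of_pos_left h1 hε
    rwa [mul_one_div_cancel hε.ne'] at this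
  have hp0 (n : ℕ) : 0 ≤ ((n + 2 : ℕ) : ℝ) ^ (-1 + ε) := by positivity
  have hp1 (n : ℕ) : ((n + 2 : ℕ) : ℝ) ^ (-1 + ε) ≤ 1 :=
    Real.rpow_le_one_of_one_le_of_nonpos (by norm_cast; omega) (by nlinarith)
  have hexpected : Tendsto (fun n : ℕ => ∑ m ∈ range (k - 1),
      ENNReal.ofReal (((n + 2 : ℕ) : ℝ) ^ m * (((n + 2 : ℕ) : ℝ) ^ (-1 + ε)) ^ (m + 1)))
      atTop (𝓝 0) := by
    rw [← sum_const_zero (s := range (k - 1)), ← ENNReal.ofReal_zero]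
    refine tendsto_finsetSum _ fun m hm => ENNReal.tendsto_ofReal ?_
    have : (m + 1 : ℝ) ≤ k - 1 := by
      rw [← Nat.cast_pred (by omega)]
      exact_mod_cast mem_range.mp hm
    exact (tendsto_pow_mul_rpow_pow_atTop (by nlinarith)).comp
      (tendsto_natCast_atTop_atTop.comp (tendsto_add_atTop_nat 2))
  have hshort := tendsto_of_tendsto_of_tendsto_of_le_of_le tendsto_const_nhds hexpected
    (fun _ => zero_le) fun n => erdosRenyi_exists_short_path_le (hp0 n) (hp1 n)
      (a := (0 : Fin (n + 2))) (b := 1) (by simp) (k - 1)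
  refine ⟨hshort, tendsto_of_tendsto_of_tendsto_of_le_of_le ?_ tendsto_const_nhds
    (fun n => one_sub_erdosRenyi_exists_short_path_le (hp0 n) (hp1 n) 0 1 k)
    fun n => (isProbabilityMeasure_erdosRenyi (hp0 n) (hp1 n)).measure_univ ▸ measure_mono
      (Set.subset_univ _)⟩
  simpa using ENNReal.Tendsto.sub tendsto_const_nhds hshort (Or.inl ENNReal.one_ne_top)

/-- With `k ≥ 2`, `k − 1 < 1/ε < k` and `p(n) = n^(−1+ε)`, the probability that the two
vertices `0` and `1` are joined in `G(n, p(n))` by a path of length at most `k − 1` tends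
to `0` as `n → ∞`; consequently, with probability tending to `1`, the diameter of
`G(n, p(n))` is at least `k` (where a disconnected graph has infinite diameter). -/
theorem no_short_path_and_diam_ge
    (k : ℕ) (hk : 2 ≤ k) (ε : ℝ) (h1 : (k : ℝ) - 1 < 1 / ε) (h2 : 1 / ε < k) :
    Filter.Tendsto
      (fun n : ℕ => erdosRenyi (n + 2) (((n + 2 : ℕ) : ℝ) ^ (-1 + ε))
        {G | ∃ l ≤ k - 1, ∃ γ : Fin (l + 1) → Fin (n + 2), IsPathBetween G l 0 1 γ})
      Filter.atTop (nhds 0)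
    ∧ Filter.Tendsto
      (fun n : ℕ => erdosRenyi (n + 2) (((n + 2 : ℕ) : ℝ) ^ (-1 + ε))
        {G | (k : ℕ∞) ≤ G.ediam})
      Filter.atTop (nhds 1) :=
  no_short_path_and_diam_ge_general k hk ε h1
end

section
/- Let k ≥ 2 be an integer and let ε be a real number with k − 1 < 1/ε < k, and set p(n) := n^{−1+ε}. For distinct a, b ∈ Fin n let Δ_n denote the sum, over all ordered pairs (P₁, P₂) of distinct paths of length k between a and b in the complete graph on Fin n whose edge sets share at least one edge, of p(n)^{|E(P₁) ∪ E(P₂)|}, where |E(P₁) ∪ E(P₂)| is the number of edges in the union of the two edge sets. Then there is a constant C = C(k, ε) > 0 such that Δ_n ≤ C · n^{2(kε−1)−ε} for all n ≥ 2 and all distinct a, b ∈ Fin n. -/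
/-- The edge set of a path `γ₀, …, γ_k`: the unordered pairs `{γ_{i−1}, γ_i}`. -/
def pathEdges {V : Type*} {k : ℕ} (γ : Fin (k + 1) → V) : Set (Sym2 V) :=
  {e | ∃ i : Fin k, e = s(γ i.castSucc, γ i.succ)}


/-!
Write `p = n ^ (-1 + ε)`. If a path `δ ≠ γ` leaves `γ` at `t` positions, it has at least `t + 1`
edges outside `γ`, so the pair `(γ, δ)` contributes at most `p ^ (k + 1 + t)`. A shared edge gives a
vertex of `γ` at an interior position `i₀` of `δ`. For fixed `γ` (at most `n ^ (k - 1)` choices) and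
`i₀`, the weighted sum over `δ` factorises over positions: at most `k + 1` choices at each of `0`,
`i₀`, `k`, and total weight at most `k + 1 + n p` at each other position. Since `n p = n ^ ε ≥ 1`,
`Δ ≤ C p ^ (k + 1) n ^ (k - 1) (n p) ^ (k - 2) = C n ^ (2 (k ε - 1) - ε)`.
-/

open Finset Function

section Paths

variable {V : Type*} {k : ℕ} {γ δ : Fin (k + 1) → V}

lemma pathEdges_eq_range (γ : Fin (k + 1) → V) :
    pathEdges γ = Set.range fun j : Fin k => s(γ j.castSucc, γ j.succ) :=
  Set.ext fun _ => exists_congr fun _ => eq_comm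

lemma finite_pathEdges (γ : Fin (k + 1) → V) : (pathEdges γ).Finite :=
  pathEdges_eq_range γ ▸ Set.finite_range _

lemma injective_sym2Mk_castSucc_succ (hγ : Injective γ) :
    Injective fun j : Fin k => s(γ j.castSucc, γ j.succ) := by
  intro i j hij
  rcases Sym2.eq_iff.1 hij with ⟨h, -⟩ | ⟨h₁, h₂⟩
  · exact Fin.castSucc_injective _ (hγ h)
  · have := congrArg Fin.val (hγ h₁)
    have := congrArg Fin.val (hγ h₂)
    simp only [Fin.val_castSucc, Fin.val_succ] at *
    omega

lemma ncard_pathEdges (hγ : Injective γ) : (pathEdges γ).ncard = k := by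
  rw [pathEdges_eq_range, Set.ncard_range_of_injective (injective_sym2Mk_castSucc_succ hγ),
    Nat.card_eq_fintype_card, Fintype.card_fin]

lemma mem_range_of_mem_pathEdges {e : Sym2 V} {x : V} (he : e ∈ pathEdges γ) (hx : x ∈ e) :
    x ∈ Set.range γ := by
  obtain ⟨i, rfl⟩ := he
  rcases Sym2.mem_iff.1 hx with rfl | rfl <;> exact ⟨_, rfl⟩

/-- Reading the edges of `δ` in order, each one continues along `γ`: the alternative, an edge
traversed backwards, would send `δ` back to a vertex it has already visited. -/
lemma eq_of_pathEdges_subset (hγ : Injective γ) (hδ : Injective δ) (h0 : δ 0 = γ 0)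
    (hsub : pathEdges δ ⊆ pathEdges γ) : δ = γ := by
  suffices h : ∀ i : Fin (k + 1), ∀ j ≤ i, δ j = γ j from funext fun i => h i i le_rfl
  intro i
  induction i using Fin.induction with
  | zero => intro j hj; rw [nonpos_iff_eq_zero.1 hj, h0]
  | succ i ih =>
    intro j hj
    rcases hj.lt_or_eq with hj | rfl
    · exact ih j (Fin.le_castSucc_iff.2 hj)
    obtain ⟨l, hl⟩ := hsub ⟨i, rfl⟩
    rw [ih i.castSucc le_rfl] at hl
    rcases Sym2.eq_iff.1 hl with ⟨h₁, h₂⟩ | ⟨h₁, h₂⟩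
    · obtain rfl := Fin.castSucc_injective _ (hγ h₁)
      exact h₂
    · have hi := congrArg Fin.val (hγ h₁)
      simp only [Fin.val_castSucc, Fin.val_succ] at hi
      have hle : l.castSucc ≤ i.castSucc :=
        Fin.le_iff_val_le_val.2 (by simp only [Fin.val_castSucc]; omega)
      have hback := congrArg Fin.val (hδ (h₂.trans (ih l.castSucc hle).symm))
      simp only [Fin.val_castSucc, Fin.val_succ] at hback
      omega

lemma exists_interior_mem_range_of_pathEdges_inter_nonempty (hk : 2 ≤ k)
    (h : (pathEdges γ ∩ pathEdges δ).Nonempty) :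
    ∃ i, i ≠ 0 ∧ i ≠ Fin.last k ∧ δ i ∈ Set.range γ := by
  obtain ⟨_, he, j, rfl⟩ := h
  by_cases hj : (j : ℕ) = 0
  · refine ⟨j.succ, Fin.succ_ne_zero j, ?_, mem_range_of_mem_pathEdges he (by simp)⟩
    simp only [ne_eq, Fin.ext_iff, Fin.val_succ, Fin.val_last, hj]
    omega
  · refine ⟨j.castSucc, ?_, Fin.castSucc_ne_last j, mem_range_of_mem_pathEdges he (by simp)⟩
    simpa [Fin.ext_iff] using hj

end Paths

lemma Fin.card_lt_card_of_castSucc_or_succ_mem {k : ℕ} {N : Finset (Fin (k + 1))}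
    {J : Finset (Fin k)} (hN : N.Nonempty) (h0 : 0 ∉ N) (hlast : Fin.last k ∉ N)
    (hJ : ∀ j : Fin k, j.castSucc ∈ N ∨ j.succ ∈ N → j ∈ J) : #N < #J := by
  obtain ⟨j₀, hj₀⟩ := Fin.exists_castSucc_eq.2 fun h => hlast (h ▸ N.max'_mem hN)
  have hsub : N ⊆ (J.erase j₀).image Fin.succ := by
    intro i hi
    obtain ⟨j, rfl⟩ := Fin.exists_succ_eq.2 fun h => h0 (h ▸ hi)
    refine mem_image_of_mem _ (mem_erase.2 ⟨?_, hJ j (Or.inr hi)⟩)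
    rintro rfl
    exact (N.le_max' _ hi).not_gt (hj₀ ▸ Fin.castSucc_lt_succ)
  calc #N ≤ #((J.erase j₀).image Fin.succ) := card_le_card hsub
    _ ≤ #(J.erase j₀) := card_image_le
    _ < #J := card_erase_lt_of_mem (hJ j₀ (Or.inl (hj₀ ▸ N.max'_mem hN)))

section NewVertices

variable {V : Type*} [DecidableEq V] {k : ℕ}

def newVertices (γ δ : Fin (k + 1) → V) : Finset (Fin (k + 1)) :=
  {i | δ i ∉ univ.image γ}

variable {γ δ : Fin (k + 1) → V}

/-- Each new vertex of `δ` is the head of a new edge, and the last new vertex is also the tail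
of one; if there are no new vertices, `δ ≠ γ` still forces a new edge. -/
theorem add_card_newVertices_le_ncard_union (hγ : Injective γ) (hδ : Injective δ)
    (h0 : δ 0 = γ 0) (hlast : δ (Fin.last k) = γ (Fin.last k)) (hne : δ ≠ γ) :
    k + 1 + #(newVertices γ δ) ≤ (pathEdges γ ∪ pathEdges δ).ncard := by
  classical
  set J : Finset (Fin k) := {j | s(δ j.castSucc, δ j.succ) ∉ pathEdges γ}
  have hJ : ∀ j : Fin k, j.castSucc ∈ newVertices γ δ ∨ j.succ ∈ newVertices γ δ → j ∈ J := by
    intro j hj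
    simp only [J, mem_filter, mem_univ, true_and]
    intro hmem
    rcases hj with hj | hj <;> refine (mem_filter.1 hj).2 (mem_image_univ_iff_mem_range.2 ?_) <;>
      exact mem_range_of_mem_pathEdges hmem (by simp)
  have hNJ : #(newVertices γ δ) < #J := by
    rcases (newVertices γ δ).eq_empty_or_nonempty with hN | hN
    · rw [hN, card_empty, card_pos]
      by_contra hJe
      refine hne (eq_of_pathEdges_subset hγ hδ h0 ?_)
      rintro _ ⟨j, rfl⟩
      by_contra h
      exact hJe ⟨j, by simpa [J] using h⟩
    · refine Fin.card_lt_card_of_castSucc_or_succ_mem hN ?_ ?_ hJ <;>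
        simp [newVertices, h0, hlast]
  have hJE : #J ≤ (pathEdges δ \ pathEdges γ).ncard := by
    calc #J = #(J.image fun j => s(δ j.castSucc, δ j.succ)) :=
          (card_image_of_injective _ (injective_sym2Mk_castSucc_succ hδ)).symm
      _ ≤ (pathEdges δ \ pathEdges γ).ncard := by
          rw [← Set.ncard_coe_finset]
          refine Set.ncard_le_ncard ?_ ((finite_pathEdges δ).sdiff)
          intro e he
          obtain ⟨j, hj, rfl⟩ := by simpa using he
          exact ⟨⟨j, rfl⟩, (mem_filter.1 hj).2⟩
  rw [← Set.union_sdiff_self, Set.ncard_union_eq Set.disjoint_sdiff_right (finite_pathEdges γ)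
    ((finite_pathEdges δ).sdiff), ncard_pathEdges hγ]
  omega

end NewVertices

section Counting

variable {ι α : Type*} [Fintype ι] [DecidableEq ι] [Fintype α]

lemma Finset.prod_ite_mem_eq_pow_mul_pow {M : Type*} [CommMonoid M] (F : Finset ι) (x y : M) :
    ∏ i, (if i ∈ F then x else y) = x ^ #F * y ^ (Fintype.card ι - #F) := by
  rw [prod_ite, prod_const, prod_const, filter_mem_eq_inter, univ_inter, filter_not,
    filter_mem_eq_inter, univ_inter, ← compl_eq_univ_sdiff, card_compl]

def Fintype.piFinsetOn (F : Finset ι) (t : ι → Finset α) : Finset (ι → α) :=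
  piFinset fun i => if i ∈ F then t i else univ

@[simp]
lemma Fintype.mem_piFinsetOn {F : Finset ι} {t : ι → Finset α} {δ : ι → α} :
    δ ∈ piFinsetOn F t ↔ ∀ i ∈ F, δ i ∈ t i := by
  simp only [piFinsetOn, mem_piFinset]
  refine forall_congr' fun i => ?_
  split_ifs <;> simp_all

lemma Fintype.card_piFinsetOn_singleton (F : Finset ι) (c : ι → α) :
    #(piFinsetOn F fun i => {c i}) = card α ^ (card ι - #F) := by
  simp only [piFinsetOn, card_piFinset, apply_ite Finset.card, card_singleton, card_univ]
  rw [prod_ite_mem_eq_pow_mul_pow, one_pow, one_mul]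

lemma Fintype.sum_piFinsetOn_pow_card_notMem [DecidableEq α] {S : Type*} [CommSemiring S]
    (R : Finset α) (F : Finset ι) (p : S) :
    ∑ δ ∈ piFinsetOn F fun _ => R, p ^ #{i | δ i ∉ R} =
      (#R : S) ^ #F * (#R + #Rᶜ * p) ^ (card ι - #F) := by
  have hweight (δ : ι → α) : p ^ #{i | δ i ∉ R} = ∏ i, if δ i ∈ R then 1 else p := by
    rw [prod_ite, prod_const_one, one_mul, prod_const]
  simp_rw [piFinsetOn, hweight]
  rw [← prod_univ_sum (f := fun _ x => if x ∈ R then (1 : S) else p),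
    ← prod_ite_mem_eq_pow_mul_pow]
  refine Finset.prod_congr rfl fun i _ => ?_
  split_ifs
  · rw [sum_const, nsmul_one]
  · rw [sum_ite, sum_const, sum_const, nsmul_one, nsmul_eq_mul, filter_mem_eq_inter, univ_inter,
      filter_not, filter_mem_eq_inter, univ_inter, ← compl_eq_univ_sdiff]

end Counting

lemma Finset.sum_le_sum_sum_of_forall_exists_mem {ι α M : Type*} [AddCommMonoid M]
    [PartialOrder M] [IsOrderedAddMonoid M] {s : Finset α} {I : Finset ι} {t : ι → Finset α}
    {f : α → M}
    (hf : ∀ a, 0 ≤ f a) (hcover : ∀ a ∈ s, ∃ i ∈ I, a ∈ t i) :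
    ∑ a ∈ s, f a ≤ ∑ i ∈ I, ∑ a ∈ t i, f a := by
  classical
  calc ∑ a ∈ s, f a ≤ ∑ a ∈ s, ∑ i ∈ I with a ∈ t i, f a := by
        refine sum_le_sum fun a ha => ?_
        obtain ⟨i, hi, hai⟩ := hcover a ha
        exact single_le_sum (f := fun _ => f a) (fun _ _ => hf a) (mem_filter.2 ⟨hi, hai⟩)
    _ = ∑ i ∈ I, ∑ a ∈ s with a ∈ t i, f a :=
        sum_comm' fun a i => by simp only [mem_filter]; tauto
    _ ≤ ∑ i ∈ I, ∑ a ∈ t i, f a :=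
        sum_le_sum fun i _ => sum_le_sum_of_subset_of_nonneg (fun a ha => (mem_filter.1 ha).2)
          fun a _ _ => hf a

section PathPairs

variable {V : Type*} [Fintype V] {k : ℕ}

open Classical in
noncomputable def sharingPathPairs (G : SimpleGraph V) (k : ℕ) (a b : V) :
    Finset ((Fin (k + 1) → V) × (Fin (k + 1) → V)) :=
  {P | IsPathBetween G k a b P.1 ∧ IsPathBetween G k a b P.2 ∧ P.1 ≠ P.2 ∧
    (pathEdges P.1 ∩ pathEdges P.2).Nonempty}

variable {G : SimpleGraph V} {a b : V} {P : (Fin (k + 1) → V) × (Fin (k + 1) → V)}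

lemma mem_sharingPathPairs :
    P ∈ sharingPathPairs G k a b ↔ IsPathBetween G k a b P.1 ∧ IsPathBetween G k a b P.2 ∧
      P.1 ≠ P.2 ∧ (pathEdges P.1 ∩ pathEdges P.2).Nonempty := by
  simp [sharingPathPairs]

lemma coe_sharingPathPairs :
    (sharingPathPairs G k a b : Set ((Fin (k + 1) → V) × (Fin (k + 1) → V))) =
      {P | IsPathBetween G k a b P.1 ∧ IsPathBetween G k a b P.2 ∧ P.1 ≠ P.2 ∧
        (pathEdges P.1 ∩ pathEdges P.2).Nonempty} :=
  Set.ext fun _ => mem_sharingPathPairs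

variable [DecidableEq V]

lemma pow_ncard_union_le_of_mem_sharingPathPairs (hP : P ∈ sharingPathPairs G k a b) {p : ℝ}
    (hp0 : 0 ≤ p) (hp1 : p ≤ 1) :
    p ^ (pathEdges P.1 ∪ pathEdges P.2).ncard ≤ p ^ (k + 1) * p ^ #(newVertices P.1 P.2) := by
  obtain ⟨⟨h10, h1l, h1, -⟩, ⟨h20, h2l, h2, -⟩, hne, -⟩ := mem_sharingPathPairs.1 hP
  rw [← pow_add]
  exact pow_le_pow_of_le_one hp0 hp1 (add_card_newVertices_le_ncard_union h1 h2
    (h20.trans h10.symm) (h2l.trans h1l.symm) (Ne.symm hne))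

lemma exists_interior_of_mem_sharingPathPairs (hk : 2 ≤ k) (hP : P ∈ sharingPathPairs G k a b) :
    ∃ i₀, i₀ ≠ 0 ∧ i₀ ≠ Fin.last k ∧
      P.1 ∈ Fintype.piFinsetOn {0, Fin.last k} (fun i => {if i = 0 then a else b}) ∧
      P.2 ∈ Fintype.piFinsetOn {0, Fin.last k, i₀} fun _ => univ.image P.1 := by
  obtain ⟨⟨h10, h1l, -⟩, ⟨h20, h2l, -⟩, -, hshare⟩ := mem_sharingPathPairs.1 hP
  obtain ⟨i₀, hi0, hil, hmem⟩ := exists_interior_mem_range_of_pathEdges_inter_nonempty hk hshare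
  have hlast : Fin.last k ≠ 0 := by rw [Ne, Fin.ext_iff, Fin.val_last, Fin.val_zero]; omega
  refine ⟨i₀, hi0, hil, ?_, ?_⟩ <;>
    simp only [Fintype.mem_piFinsetOn, mem_insert, mem_singleton, forall_eq_or_imp, forall_eq,
      if_pos, if_neg hlast, mem_image_univ_iff_mem_range]
  · exact ⟨h10, h1l⟩
  · exact ⟨⟨0, h10.trans h20.symm⟩, ⟨_, h1l.trans h2l.symm⟩, hmem⟩

lemma sum_sum_pow_card_newVertices_le (D : Finset (Fin (k + 1) → V)) (F : Finset (Fin (k + 1)))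
    {p : ℝ} (hp : 0 ≤ p) :
    ∑ γ ∈ D, ∑ δ ∈ Fintype.piFinsetOn F (fun _ => univ.image γ), p ^ #(newVertices γ δ) ≤
      #D * ((k + 1) ^ #F * (k + 1 + Fintype.card V * p) ^ (k + 1 - #F)) := by
  rw [← nsmul_eq_mul]
  refine sum_le_card_nsmul _ _ _ fun γ _ => ?_
  have hR : (#(univ.image γ) : ℝ) ≤ k + 1 := by
    exact_mod_cast card_image_le.trans (card_fin (k + 1)).le
  have hRc : (#(univ.image γ)ᶜ : ℝ) ≤ Fintype.card V := by exact_mod_cast card_le_univ _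
  simp only [newVertices]
  rw [Fintype.sum_piFinsetOn_pow_card_notMem, Fintype.card_fin]
  gcongr

theorem sum_sharingPathPairs_le (hk : 2 ≤ k) {p : ℝ} (hp0 : 0 ≤ p) (hp1 : p ≤ 1) :
    ∑ P ∈ sharingPathPairs G k a b, p ^ (pathEdges P.1 ∪ pathEdges P.2).ncard ≤
      (k + 1) * (p ^ (k + 1) * (Fintype.card V ^ (k - 1) *
        ((k + 1) ^ 3 * (k + 1 + Fintype.card V * p) ^ (k - 2)))) := by
  set D := Fintype.piFinsetOn {0, Fin.last k} fun i => {if i = 0 then a else b}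
  set F : Fin (k + 1) → Finset (Fin (k + 1)) := fun i₀ => {0, Fin.last k, i₀}
  set T := fun i₀ (γ : Fin (k + 1) → V) => Fintype.piFinsetOn (F i₀) fun _ => univ.image γ
  set Q := fun i₀ => (D ×ˢ univ).filter fun P => P.2 ∈ T i₀ P.1
  set I : Finset (Fin (k + 1)) := {i | i ≠ 0 ∧ i ≠ Fin.last k}
  have hlast : Fin.last k ≠ 0 := by rw [Ne, Fin.ext_iff, Fin.val_last, Fin.val_zero]; omega
  have hcover : ∀ P ∈ sharingPathPairs G k a b, ∃ i₀ ∈ I, P ∈ Q i₀ := fun P hP => by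
    obtain ⟨i₀, hi0, hil, h1, h2⟩ := exists_interior_of_mem_sharingPathPairs hk hP
    exact ⟨i₀, by simp [I, hi0, hil], mem_filter.2 ⟨mem_product.2 ⟨h1, mem_univ _⟩, h2⟩⟩
  have hF : ∀ i₀ ∈ I, #(F i₀) = 3 := by
    intro i₀ hi₀
    simp only [I, mem_filter, mem_univ, true_and] at hi₀
    rw [card_insert_of_notMem (by simp [hlast.symm, hi₀.1.symm]), card_pair (Ne.symm hi₀.2)]
  have hD : #D = Fintype.card V ^ (k - 1) := by
    rw [Fintype.card_piFinsetOn_singleton, card_pair hlast.symm, Fintype.card_fin,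
      show k + 1 - 2 = k - 1 by omega]
  have hI : (#I : ℝ) ≤ k + 1 := by exact_mod_cast (card_le_univ I).trans (card_fin (k + 1)).le
  calc ∑ P ∈ sharingPathPairs G k a b, p ^ (pathEdges P.1 ∪ pathEdges P.2).ncard
      ≤ ∑ P ∈ sharingPathPairs G k a b, p ^ (k + 1) * p ^ #(newVertices P.1 P.2) :=
        sum_le_sum fun P hP => pow_ncard_union_le_of_mem_sharingPathPairs hP hp0 hp1
    _ ≤ ∑ i₀ ∈ I, ∑ P ∈ Q i₀, p ^ (k + 1) * p ^ #(newVertices P.1 P.2) :=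
        sum_le_sum_sum_of_forall_exists_mem (fun _ => by positivity) hcover
    _ = ∑ i₀ ∈ I, p ^ (k + 1) * ∑ γ ∈ D, ∑ δ ∈ T i₀ γ, p ^ #(newVertices γ δ) := by
        refine sum_congr rfl fun i₀ _ => ?_
        rw [sum_finset_product (Q i₀) D (T i₀) fun P => by simp [Q], mul_sum]
        simp_rw [mul_sum]
    _ ≤ ∑ i₀ ∈ I, p ^ (k + 1) * (#D * ((k + 1) ^ #(F i₀) *
          (k + 1 + Fintype.card V * p) ^ (k + 1 - #(F i₀)))) := by
        gcongr
        exact sum_sum_pow_card_newVertices_le _ _ hp0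
    _ = #I * (p ^ (k + 1) * (Fintype.card V ^ (k - 1) *
          ((k + 1) ^ 3 * (k + 1 + Fintype.card V * p) ^ (k - 2)))) := by
        rw [sum_congr rfl fun i₀ hi₀ => by rw [hF i₀ hi₀], sum_const, nsmul_eq_mul, hD,
          show k + 1 - 3 = k - 2 by omega, Nat.cast_pow]
    _ ≤ _ := by gcongr

end PathPairs

lemma sharingPathPairs_bound_le_rpow {k : ℕ} (hk : 2 ≤ k) {ε x : ℝ} (hε : 0 ≤ ε) (hx : 1 ≤ x) :
    (k + 1) * ((x ^ (-1 + ε)) ^ (k + 1) * (x ^ (k - 1) *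
        ((k + 1) ^ 3 * (k + 1 + x * x ^ (-1 + ε)) ^ (k - 2)))) ≤
      (k + 1) ^ 4 * (k + 2) ^ (k - 2) * x ^ (2 * (k * ε - 1) - ε) := by
  have hx0 : 0 < x := by linarith
  have hxp : x * x ^ (-1 + ε) = x ^ ε := by
    simpa using (Real.rpow_add hx0 1 (-1 + ε)).symm
  have hxε : 1 ≤ x ^ ε := Real.one_le_rpow hx hε
  have hexp : (x ^ (-1 + ε)) ^ (k + 1) * (x ^ (k - 1) * (x ^ ε) ^ (k - 2)) =
      x ^ (2 * (k * ε - 1) - ε) := by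
    rw [← Real.rpow_mul_natCast hx0.le, ← Real.rpow_natCast, ← Real.rpow_mul_natCast hx0.le,
      ← Real.rpow_add hx0, ← Real.rpow_add hx0, Nat.cast_sub (by omega), Nat.cast_sub hk]
    push_cast
    ring_nf
  calc _ ≤ (k + 1) * ((x ^ (-1 + ε)) ^ (k + 1) * (x ^ (k - 1) *
          ((k + 1) ^ 3 * ((k + 2) * x ^ ε) ^ (k - 2)))) := by
        rw [hxp]
        gcongr
        nlinarith
    _ = (k + 1) ^ 4 * (k + 2) ^ (k - 2) *
          ((x ^ (-1 + ε)) ^ (k + 1) * (x ^ (k - 1) * (x ^ ε) ^ (k - 2))) := by rw [mul_pow]; ring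
    _ = _ := by rw [hexp]

theorem delta_bound_general
    (k : ℕ) (hk : 2 ≤ k) (ε : ℝ) (h1 : (k : ℝ) - 1 < 1 / ε) :
    ∃ C : ℝ, 0 < C ∧ ∀ n : ℕ, 2 ≤ n → ∀ a b : Fin n, a ≠ b →
      (∑ᶠ P ∈ {P : (Fin (k + 1) → Fin n) × (Fin (k + 1) → Fin n) |
            IsPathBetween (⊤ : SimpleGraph (Fin n)) k a b P.1 ∧
            IsPathBetween (⊤ : SimpleGraph (Fin n)) k a b P.2 ∧
            P.1 ≠ P.2 ∧ (pathEdges P.1 ∩ pathEdges P.2).Nonempty},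
          ((n : ℝ) ^ (-1 + ε)) ^ (pathEdges P.1 ∪ pathEdges P.2).ncard)
        ≤ C * (n : ℝ) ^ (2 * ((k : ℝ) * ε - 1) - ε) := by
  have hinv : 1 < 1 / ε := by
    have : (2 : ℝ) ≤ k := by exact_mod_cast hk
    linarith
  have hε : 0 < ε := one_div_pos.1 (one_pos.trans hinv)
  refine ⟨(k + 1) ^ 4 * (k + 2) ^ (k - 2), by positivity, fun n hn a b _ => ?_⟩
  have hn : (1 : ℝ) ≤ n := by exact_mod_cast (by omega : 1 ≤ n)
  have hp1 : (n : ℝ) ^ (-1 + ε) ≤ 1 :=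
    Real.rpow_le_one_of_one_le_of_nonpos hn (by linarith [(one_lt_div hε).1 hinv])
  rw [← coe_sharingPathPairs, finsum_mem_coe_finset]
  refine (sum_sharingPathPairs_le hk (by positivity) hp1).trans ?_
  rw [Fintype.card_fin]
  exact sharingPathPairs_bound_le_rpow hk hε.le hn

/-- With `k ≥ 2`, `k − 1 < 1/ε < k` and `p(n) = n^(−1+ε)`: there is a constant
`C = C(k, ε) > 0` such that for all `n ≥ 2` and all distinct `a, b : Fin n`, the sum
`Δ_n = ∑ p(n)^{|E(P₁) ∪ E(P₂)|}` over ordered pairs of distinct, edge-sharing paths of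
length `k` between `a` and `b` in the complete graph satisfies
`Δ_n ≤ C · n^(2(kε−1)−ε)`. -/
theorem delta_bound
    (k : ℕ) (hk : 2 ≤ k) (ε : ℝ) (h1 : (k : ℝ) - 1 < 1 / ε) (h2 : 1 / ε < k) :
    ∃ C : ℝ, 0 < C ∧ ∀ n : ℕ, 2 ≤ n → ∀ a b : Fin n, a ≠ b →
      (∑ᶠ P ∈ {P : (Fin (k + 1) → Fin n) × (Fin (k + 1) → Fin n) |
            IsPathBetween (⊤ : SimpleGraph (Fin n)) k a b P.1 ∧
            IsPathBetween (⊤ : SimpleGraph (Fin n)) k a b P.2 ∧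
            P.1 ≠ P.2 ∧ (pathEdges P.1 ∩ pathEdges P.2).Nonempty},
          ((n : ℝ) ^ (-1 + ε)) ^ (pathEdges P.1 ∪ pathEdges P.2).ncard)
        ≤ C * (n : ℝ) ^ (2 * ((k : ℝ) * ε - 1) - ε) :=
  delta_bound_general k hk ε h1
end
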